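/- If p is a complex polynomial of degree n having no zero in the open disk {z : |z| < k} with k ≥ 1, then max_{|z|=1} |p'(z)| ≤ (n/(1+k)) · [max_{|z|=1} |p(z)| − min_{|z|=k} |p(z)|]. -/

import Mathlib

open Polynomial Metric

noncomputable def polyMaxOn (p : Polynomial ℂ) (r : ℝ) : ℝ :=
  sSup ((fun z => ‖p.eval z‖) '' sphere (0 : ℂ) r)

noncomputable def polyMinOn (p : Polynomial ℂ) (r : ℝ) : ℝ :=
  sInf ((fun z => ‖p.eval z‖) '' sphere (0 : ℂ) r)

/-! For `‖z‖ = 1` put `q := n p(z) - z p'(z)`; this is `|Q'(z)|` for the conjugate-reciprocal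
polynomial `Q(z) = zⁿ conj (p (1 / conj z))`. Malik's inequality `κ |p'(z)| ≤ |q|` holds as soon
as `p` has no zero in `|w| < κ`, `κ ≥ 1`: `z p'(z) / p(z) = ∑ z / (z - r)` over the roots, each
summand lies in the convex Apollonius region `κ |w| ≤ |1 - w|`, hence so does their average.
Applying it to `p - c` with `c` pointing in the direction of `q`: for `|c| > M` (no zeros in the
unit disc by the maximum modulus principle, `κ = 1`) it gives `|p'(z)| + |q| ≤ n M`, and for
`|c| < m` (no zeros in `|w| < k` by the minimum modulus principle, `κ = k`) it gives
`k |p'(z)| + n m ≤ |q|`. Adding the two yields `(1 + k) |p'(z)| ≤ n (M - m)`. -/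

open scoped Pointwise

theorem add_le_of_forall_lt_le_abs_sub {a b S : ℝ} (ha : 0 ≤ a) (h₀ : a = 0 → b ≤ S)
    (h : ∀ s, S < s → a ≤ |b - s|) : a + b ≤ S := by
  by_contra! hlt
  rcases le_or_gt b S with hb | hb
  · have := h ((S + a + b) / 2) (by linarith)
    rw [abs_of_neg (by linarith)] at this
    linarith
  · have := h b hb
    rw [sub_self, abs_zero] at this
    linarith [h₀ (le_antisymm this ha)]

theorem add_le_of_forall_gt_le_abs_sub {a b S : ℝ} (ha : 0 ≤ a) (hab : a ≤ b)
    (h₀ : a = 0 → S ≤ b) (h : ∀ s, 0 ≤ s → s < S → a ≤ |b - s|) : a + S ≤ b := by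
  by_contra! hlt
  rcases lt_or_ge b S with hb | hb
  · have := h b (ha.trans hab) hb
    rw [sub_self, abs_zero] at this
    linarith [h₀ (le_antisymm this ha)]
  · have := h ((b - a + S) / 2) (by linarith) (by linarith)
    rw [abs_of_pos (by linarith)] at this
    linarith

theorem exists_norm_eq_and_norm_sub_eq {E : Type*} [NormedAddCommGroup E] [NormedSpace ℝ E]
    [Nontrivial E] (x : E) {s : ℝ} (hs : 0 ≤ s) : ∃ c : E, ‖c‖ = s ∧ ‖x - c‖ = |‖x‖ - s| := by
  rcases eq_or_ne x 0 with rfl | hx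
  · obtain ⟨c, hc⟩ := exists_norm_eq E hs
    exact ⟨c, hc, by simp [hc, abs_of_nonneg hs]⟩
  have hx' : ‖x‖ ≠ 0 := norm_ne_zero_iff.mpr hx
  refine ⟨(s / ‖x‖) • x, ?_, ?_⟩
  · rw [norm_smul, Real.norm_of_nonneg (by positivity), div_mul_cancel₀ _ hx']
  · nth_rewrite 1 [← one_smul ℝ x]
    rw [← sub_smul, norm_smul, Real.norm_eq_abs,
      show ‖x‖ - s = (1 - s / ‖x‖) * ‖x‖ by field_simp, abs_mul, abs_norm]

section Apollonius

variable {E : Type*} [NormedAddCommGroup E] [InnerProductSpace ℝ E]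

theorem Convex.multiset_sum_mem_card_smul {s : Set E} (hs : Convex ℝ s) (hne : s.Nonempty)
    {S : Multiset E} (hS : ∀ x ∈ S, x ∈ s) : S.sum ∈ (Multiset.card S : ℝ) • s := by
  induction S using Multiset.induction with
  | empty => simp [Set.zero_smul_set hne]
  | cons x S ih =>
    rw [Multiset.sum_cons, Multiset.card_cons, Nat.cast_succ, add_comm _ (1 : ℝ),
      hs.add_smul zero_le_one S.card.cast_nonneg, one_smul]
    exact Set.add_mem_add (hS x (Multiset.mem_cons_self x S))
      (ih fun y hy => hS y (Multiset.mem_cons_of_mem hy))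

theorem convex_setOf_mul_norm_le_norm_sub {κ : ℝ} (hκ : 1 ≤ κ) (a : E) :
    Convex ℝ {x : E | κ * ‖x‖ ≤ ‖a - x‖} := by
  have hconv : ConvexOn ℝ Set.univ fun x : E => (κ ^ 2 - 1) * ‖x‖ ^ 2 + 2 * inner ℝ a x := by
    refine ConvexOn.add ?_ ((innerₛₗ ℝ a).convexOn convex_univ |>.smul zero_le_two)
    exact ((convexOn_norm convex_univ).pow (fun x _ => norm_nonneg x) 2).smul (by nlinarith)
  convert hconv.convex_le (‖a‖ ^ 2) using 1
  ext x
  simp only [Set.mem_ofPred_eq, Set.mem_univ, true_and]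
  rw [← sq_le_sq₀ (by positivity) (norm_nonneg _), norm_sub_sq_real, mul_pow]
  constructor <;> intro h <;> linarith

theorem mul_norm_multiset_sum_le {κ : ℝ} (hκ : 1 ≤ κ) (a : E) {S : Multiset E}
    (hS : ∀ x ∈ S, κ * ‖x‖ ≤ ‖a - x‖) :
    κ * ‖S.sum‖ ≤ ‖Multiset.card S • a - S.sum‖ := by
  obtain ⟨d, hd, hsum⟩ := (convex_setOf_mul_norm_le_norm_sub hκ a).multiset_sum_mem_card_smul
    ⟨0, by simp⟩ hS
  have hd' : κ * ‖d‖ ≤ ‖a - d‖ := hd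
  rw [← hsum, ← Nat.cast_smul_eq_nsmul ℝ, ← smul_sub, norm_smul, norm_smul, mul_left_comm]
  exact mul_le_mul_of_nonneg_left hd' (norm_nonneg _)

end Apollonius

theorem Complex.norm_le_of_forall_mem_sphere_norm_le {E F : Type*} [NormedAddCommGroup E]
    [NormedSpace ℂ E] [Nontrivial E] [NormedAddCommGroup F] [NormedSpace ℂ F] {f : E → F}
    {x : E} {r C : ℝ} (hr : 0 < r) (hf : DifferentiableOn ℂ f (closedBall x r))
    (hC : ∀ ζ ∈ sphere x r, ‖f ζ‖ ≤ C) {w : E} (hw : w ∈ closedBall x r) : ‖f w‖ ≤ C := by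
  rw [← closure_ball x hr.ne'] at hf hw
  exact norm_le_of_forall_mem_frontier_norm_le isBounded_ball hf.diffContOnCl
    (by rwa [frontier_ball x hr.ne']) hw

theorem norm_eval_le_polyMaxOn (p : ℂ[X]) {r : ℝ} (hr : 0 < r) {w : ℂ} (hw : ‖w‖ ≤ r) :
    ‖p.eval w‖ ≤ polyMaxOn p r := by
  have hbdd : BddAbove ((fun z => ‖p.eval z‖) '' sphere (0 : ℂ) r) :=
    (isCompact_sphere 0 r).bddAbove_image (continuous_norm.comp p.continuous).continuousOn
  exact Complex.norm_le_of_forall_mem_sphere_norm_le hr p.differentiable.differentiableOn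
    (fun ζ hζ => le_csSup hbdd ⟨ζ, hζ, rfl⟩) (mem_closedBall_zero_iff.mpr hw)

theorem polyMinOn_le_norm_eval (p : ℂ[X]) {r : ℝ} (hr : 0 < r)
    (hp : ∀ z, p.eval z = 0 → r ≤ ‖z‖) {w : ℂ} (hw : ‖w‖ ≤ r) :
    polyMinOn p r ≤ ‖p.eval w‖ := by
  set m := polyMinOn p r
  have hsphere : ∀ ζ ∈ sphere (0 : ℂ) r, m ≤ ‖p.eval ζ‖ := fun ζ hζ =>
    csInf_le ⟨0, by rintro _ ⟨_, _, rfl⟩; exact norm_nonneg _⟩ ⟨ζ, hζ, rfl⟩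
  rcases le_or_gt m 0 with hm | hm
  · exact hm.trans (norm_nonneg _)
  have hne : ∀ ζ ∈ closedBall (0 : ℂ) r, p.eval ζ ≠ 0 := fun ζ hζ hζ0 => by
    have hζr : ζ ∈ sphere (0 : ℂ) r :=
      mem_sphere_zero_iff_norm.mpr (le_antisymm (mem_closedBall_zero_iff.mp hζ) (hp ζ hζ0))
    have := hsphere ζ hζr
    rw [hζ0, norm_zero] at this
    linarith
  have hinv : ‖(p.eval w)⁻¹‖ ≤ m⁻¹ := by
    refine Complex.norm_le_of_forall_mem_sphere_norm_le hr
      (p.differentiable.differentiableOn.inv hne) (fun ζ hζ => ?_) (mem_closedBall_zero_iff.mpr hw)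
    rw [Pi.inv_apply, norm_inv]
    exact inv_anti₀ hm (hsphere ζ hζ)
  rwa [norm_inv, inv_le_inv₀ (norm_pos_iff.mpr (hne w (mem_closedBall_zero_iff.mpr hw))) hm] at hinv

namespace Polynomial

theorem mul_norm_mul_eval_derivative_le (P : ℂ[X]) {κ : ℝ} (hκ : 1 ≤ κ) {z : ℂ}
    (hroots : ∀ r ∈ P.roots, κ * ‖z‖ ≤ ‖r‖) :
    κ * ‖z * P.derivative.eval z‖ ≤ ‖P.natDegree * P.eval z - z * P.derivative.eval z‖ := by
  by_cases hPz : P.eval z = 0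
  · rcases eq_or_ne P 0 with rfl | hP
    · simp
    have hz : κ * ‖z‖ ≤ ‖z‖ := hroots z ((mem_roots hP).mpr hPz)
    rw [hPz, mul_zero, zero_sub, norm_neg, norm_mul, ← mul_assoc]
    exact mul_le_mul_of_nonneg_right hz (norm_nonneg _)
  set S := P.roots.map fun r => z / (z - r)
  have hzr : ∀ r ∈ P.roots, z - r ≠ 0 := fun r hr h =>
    hPz (sub_eq_zero.mp h ▸ isRoot_of_mem_roots hr)
  have hS : ∀ w ∈ S, κ * ‖w‖ ≤ ‖1 - w‖ := by
    simp only [S, Multiset.mem_map]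
    rintro _ ⟨r, hr, rfl⟩
    have hdiff : 1 - z / (z - r) = -r / (z - r) := by field_simp [hzr r hr]; ring
    rw [hdiff, norm_div, norm_div, norm_neg, ← mul_div_assoc]
    exact div_le_div_of_nonneg_right (hroots r hr) (norm_nonneg _)
  have hlog : z * P.derivative.eval z = P.eval z * S.sum := by
    rw [(IsAlgClosed.splits P).eval_derivative_eq_eval_mul_sum hPz, mul_left_comm,
      ← Multiset.sum_map_mul_left]
    simp [S, div_eq_mul_inv]
  have hcard : (P.natDegree : ℂ) = Multiset.card S • (1 : ℂ) := by
    simp [S, splits_iff_card_roots.mp (IsAlgClosed.splits P)]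
  rw [hcard, hlog, mul_comm _ (P.eval z), ← mul_sub, norm_mul, norm_mul, mul_left_comm]
  exact mul_le_mul_of_nonneg_left (mul_norm_multiset_sum_le hκ 1 hS) (norm_nonneg _)

variable (p : ℂ[X]) {z : ℂ}

/-- Malik's inequality for `p - c / n`, where `‖c‖ = s` and `c` points in the direction of
`n p(z) - z p'(z)`. -/
theorem mul_norm_eval_derivative_le_abs_sub (hn : p.natDegree ≠ 0) {κ : ℝ} (hκ : 1 ≤ κ)
    (hz : ‖z‖ = 1) {s : ℝ} (hs : 0 ≤ s) (hlevel : ∀ w, p.natDegree * ‖p.eval w‖ = s → κ ≤ ‖w‖) :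
    κ * ‖p.derivative.eval z‖ ≤
      |‖p.natDegree * p.eval z - z * p.derivative.eval z‖ - s| := by
  have hn' : (p.natDegree : ℂ) ≠ 0 := Nat.cast_ne_zero.mpr hn
  obtain ⟨c, hcs, hc⟩ := exists_norm_eq_and_norm_sub_eq
    (p.natDegree * p.eval z - z * p.derivative.eval z) hs
  have h := (p - C (c / p.natDegree)).mul_norm_mul_eval_derivative_le hκ (z := z) fun r hr => by
    rw [hz, mul_one]
    refine hlevel r ?_
    have hr' : p.eval r = c / p.natDegree := by simpa [sub_eq_zero] using isRoot_of_mem_roots hr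
    rw [hr', norm_div, Complex.norm_natCast, hcs]
    field_simp
  rw [natDegree_sub_C, derivative_sub, derivative_C, sub_zero, norm_mul, hz, one_mul, eval_sub,
    eval_C, mul_sub, mul_div_cancel₀ c hn', sub_right_comm, hc] at h
  exact h

theorem norm_eval_derivative_add_le_polyMaxOn (hn : p.natDegree ≠ 0) (hz : ‖z‖ = 1) :
    ‖p.derivative.eval z‖ + ‖p.natDegree * p.eval z - z * p.derivative.eval z‖ ≤
      p.natDegree * polyMaxOn p 1 := by
  have hmax : ∀ w : ℂ, ‖w‖ ≤ 1 → ‖p.eval w‖ ≤ polyMaxOn p 1 :=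
    fun w hw => norm_eval_le_polyMaxOn p one_pos hw
  have hM0 : 0 ≤ polyMaxOn p 1 := (norm_nonneg _).trans (hmax 0 (by simp))
  refine add_le_of_forall_lt_le_abs_sub (norm_nonneg _) (fun h0 => ?_) (fun s hs => ?_)
  · rw [norm_eq_zero.mp h0, mul_zero, sub_zero, norm_mul, Complex.norm_natCast]
    exact mul_le_mul_of_nonneg_left (hmax z hz.le) (Nat.cast_nonneg _)
  · rw [← one_mul ‖_‖]
    refine p.mul_norm_eval_derivative_le_abs_sub hn le_rfl hz
      ((mul_nonneg (Nat.cast_nonneg _) hM0).trans hs.le) fun w hw => ?_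
    by_contra! hw1
    have := mul_le_mul_of_nonneg_left (hmax w hw1.le) (Nat.cast_nonneg p.natDegree)
    linarith

theorem mul_norm_eval_derivative_add_le (hn : p.natDegree ≠ 0) {k : ℝ} (hk : 1 ≤ k)
    (hp : ∀ z, p.eval z = 0 → k ≤ ‖z‖) (hz : ‖z‖ = 1) :
    k * ‖p.derivative.eval z‖ + p.natDegree * polyMinOn p k ≤
      ‖p.natDegree * p.eval z - z * p.derivative.eval z‖ := by
  have hmin : ∀ w : ℂ, ‖w‖ ≤ k → polyMinOn p k ≤ ‖p.eval w‖ :=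
    fun w hw => polyMinOn_le_norm_eval p (by linarith) hp hw
  refine add_le_of_forall_gt_le_abs_sub (by positivity) ?_ (fun h0 => ?_) (fun s hs hsm => ?_)
  · simpa using p.mul_norm_eval_derivative_le_abs_sub hn hk hz le_rfl
      fun w hw => hp w (by simpa [hn] using hw)
  · have hA : p.derivative.eval z = 0 := by
      simpa [(by linarith : k ≠ 0)] using h0
    rw [hA, mul_zero, sub_zero, norm_mul, Complex.norm_natCast]
    exact mul_le_mul_of_nonneg_left (hmin z (hz.trans_le hk)) (Nat.cast_nonneg _)
  · refine p.mul_norm_eval_derivative_le_abs_sub hn hk hz hs fun w hw => ?_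
    by_contra! hwk
    have := mul_le_mul_of_nonneg_left (hmin w hwk.le) (Nat.cast_nonneg p.natDegree)
    linarith

end Polynomial

theorem govil_upper (p : Polynomial ℂ) (n : ℕ) (k : ℝ) (hk : 1 ≤ k)
    (hn : 1 ≤ n) (hdeg : p.natDegree = n)
    (hz : ∀ z : ℂ, p.eval z = 0 → k ≤ ‖z‖) :
    polyMaxOn (derivative p) 1 ≤ (n / (1 + k)) * (polyMaxOn p 1 - polyMinOn p k) := by
  have hn' : p.natDegree ≠ 0 := by omega
  refine csSup_le ((NormedSpace.sphere_nonempty.mpr zero_le_one).image _) ?_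
  rintro _ ⟨z, hz1, rfl⟩
  rw [mem_sphere_zero_iff_norm] at hz1
  have hmax := p.norm_eval_derivative_add_le_polyMaxOn hn' hz1
  have hmin := p.mul_norm_eval_derivative_add_le hn' hk hz hz1
  rw [← hdeg, div_mul_eq_mul_div, le_div_iff₀ (by linarith)]
  linarith
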